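/- There exists a constant C > 0 such that the following holds. Let s ∈ (0,1), γ ∈ [−5, 0], η ∈ (0,1], and let ψ : [0, ∞) → [0,1] be non-increasing, 4-Lipschitz, with ψ = 1 on [0, 3/4] and ψ = 0 on [4/3, ∞); set χ(r) = 1 − ψ(r/η). For z ∈ ℝ³ \ {0} define, with t = (z/‖z‖)·σ and c = ((1 + t)/2)^{1/2}, the cancellation kernel S(z) = ‖z‖^γ ∫_{𝕊²} (1 − s) ((1 − t)/2)^{−1−s} 1_{t ≥ 0} [ c^{−γ−3} χ(‖z‖/c) − χ(‖z‖) ] dσ. Then S(z) = 0 whenever ‖z‖ < 3η/(4√2), and |S(z)| ≤ C ‖z‖^γ for all z ≠ 0. -/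

import Mathlib

open MeasureTheory
open scoped ENNReal
open Set
open scoped NNReal Pointwise

noncomputable section

/-- The velocity space `ℝ³`. -/
abbrev R3 : Type := EuclideanSpace ℝ (Fin 3)

/-- The surface measure on the unit sphere `𝕊² ⊂ ℝ³` (of total mass `4π`). -/
def sphMeas : Measure (Metric.sphere (0 : R3) 1) := (volume : Measure R3).toSphere

/-- `t = (z/‖z‖)·σ`, the cosine of the deviation angle. -/
def cosDev (z : R3) (σ : Metric.sphere (0 : R3) 1) : ℝ := inner ℝ (‖z‖⁻¹ • z) (σ : R3)

lemma norm_vhat {z : R3} (hz : z ≠ 0) : ‖‖z‖⁻¹ • z‖ = 1 := by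
  rw [norm_smul, norm_inv, norm_norm, inv_mul_cancel₀ (norm_ne_zero_iff.2 hz)]

lemma cosDev_le_one {z : R3} (hz : z ≠ 0) (σ : Metric.sphere (0 : R3) 1) :
    |cosDev z σ| ≤ 1 := by
  have h1 : ‖(σ : R3)‖ = 1 := mem_sphere_zero_iff_norm.1 σ.2
  have := abs_real_inner_le_norm (‖z‖⁻¹ • z) (σ : R3)
  rwa [norm_vhat hz, h1, one_mul] at this

lemma continuous_cosDev (z : R3) : Continuous (cosDev z) :=
  Continuous.inner continuous_const continuous_subtype_val

set_option maxHeartbeats 2000000 in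
lemma cap_bound {z : R3} (hz : z ≠ 0) (u : ℝ) (hu : 0 ≤ u) :
    sphMeas {σ : Metric.sphere (0 : R3) 1 | 1 - 2 * u ≤ cosDev z σ}
      ≤ ENNReal.ofReal (96 * u) := by
  classical
  set v : R3 := ‖z‖⁻¹ • z with hv_def
  have hv : ‖v‖ = 1 := norm_vhat hz
  -- orthonormal basis with b 0 = v
  have horth : Orthonormal ℝ (({0} : Set (Fin 3)).restrict (fun _ : Fin 3 => v)) := by
    constructor
    · intro i; simpa [Set.restrict] using hv
    · intro i j hij
      exfalso
      apply hij
      ext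
      have h1 := i.2; have h2 := j.2
      simp only [Set.mem_singleton_iff] at h1 h2
      rw [h1, h2]
  obtain ⟨b, hb⟩ := horth.exists_orthonormalBasis_extension_of_card_eq (by simp)
  have hb0 : b 0 = v := hb 0 rfl
  set S := {σ : Metric.sphere (0 : R3) 1 | 1 - 2 * u ≤ cosDev z σ} with hS_def
  have hSm : MeasurableSet S :=
    measurableSet_le measurable_const (continuous_cosDev z).measurable
  rw [sphMeas, Measure.toSphere_apply' _ hSm]
  -- the box
  set r : Fin 3 → ℝ := ![1, 2 * Real.sqrt u, 2 * Real.sqrt u] with hr_def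
  set P : Set (Fin 3 → ℝ) := Set.univ.pi fun i => Set.Icc (-(r i)) (r i) with hP_def
  have hPm : MeasurableSet P := MeasurableSet.univ_pi fun i => measurableSet_Icc
  set F : R3 → (Fin 3 → ℝ) :=
    (MeasurableEquiv.toLp 2 (Fin 3 → ℝ)).symm ∘ b.measurableEquiv with hF_def
  have hF : MeasurePreserving F volume volume :=
    (EuclideanSpace.volume_preserving_symm_measurableEquiv_toLp (Fin 3)).comp
      b.measurePreserving_measurableEquiv
  have hFx : ∀ x : R3, ∀ i, F x i = b.repr x i := fun x i => rfl
  -- inclusion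
  have hincl : Ioo (0:ℝ) 1 • (Subtype.val '' S) ⊆ F ⁻¹' P := by
    rintro x hx
    rw [Set.mem_smul] at hx
    obtain ⟨a, ha, y, hy, rfl⟩ := hx
    obtain ⟨σ, hσS, rfl⟩ := hy
    have hσ1 : ‖(σ : R3)‖ = 1 := mem_sphere_zero_iff_norm.1 σ.2
    have hxnorm : ‖a • (σ : R3)‖ = a := by
      rw [norm_smul, hσ1, mul_one, Real.norm_eq_abs, abs_of_pos ha.1]
    set x := a • (σ : R3)
    have hx1 : ‖x‖ ≤ 1 := by rw [hxnorm]; exact ha.2.le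
    have hxnn : 0 ≤ ‖x‖ := norm_nonneg _
    set w : Fin 3 → ℝ := fun i => b.repr x i with hw_def
    have hsum : w 0 ^ 2 + w 1 ^ 2 + w 2 ^ 2 = ‖x‖ ^ 2 := by
      have h1 : ‖x‖ = ‖b.repr x‖ := (b.repr.norm_map x).symm
      rw [h1, EuclideanSpace.norm_eq, Real.sq_sqrt (by positivity)]
      simp [Fin.sum_univ_three, sq_abs, hw_def]
    have hw0' : w 0 = inner ℝ v x := by
      show b.repr x 0 = _
      rw [OrthonormalBasis.repr_apply_apply, hb0]
    have hw0 : w 0 = a * inner ℝ v (σ : R3) := by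
      rw [hw0']
      exact real_inner_smul_right v _ a
    have hw0abs : |w 0| ≤ 1 := by
      rw [hw0']
      calc |inner ℝ v x| ≤ ‖v‖ * ‖x‖ := abs_real_inner_le_norm v x
        _ ≤ 1 := by rw [hv, one_mul]; exact hx1
    have hcos : 1 - 2 * u ≤ inner ℝ v (σ : R3) := hσS
    have hinner1 : |(inner ℝ v (σ:R3) : ℝ)| ≤ 1 := by
      have := abs_real_inner_le_norm v (σ : R3)
      rwa [hv, hσ1, one_mul] at this
    have hsq : (1 - 4 * u) * ‖x‖ ^ 2 ≤ w 0 ^ 2 := by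
      rcases le_or_gt 0 (1 - 2 * u) with hcase | hcase
      · have h1 : 0 ≤ w 0 := by
          rw [hw0]; exact mul_nonneg ha.1.le (le_trans hcase hcos)
        have h2 : a * (1 - 2*u) ≤ w 0 := by
          rw [hw0]; exact mul_le_mul_of_nonneg_left hcos ha.1.le
        have hxa : ‖x‖ = a := hxnorm
        rw [hxa]
        nlinarith [sq_nonneg u, sq_nonneg (w 0 - a * (1 - 2*u)), mul_pos ha.1 ha.1,
          mul_nonneg (mul_nonneg ha.1.le ha.1.le) (sq_nonneg u)]
      · have : (1 - 4 * u) * ‖x‖ ^ 2 ≤ 0 := by nlinarith [sq_nonneg ‖x‖]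
        exact le_trans this (sq_nonneg _)
    have hw1 : ∀ i, w i ^ 2 ≤ 4 * u → |w i| ≤ 2 * Real.sqrt u := by
      intro i hi
      have : |w i| = Real.sqrt (w i ^ 2) := (Real.sqrt_sq_eq_abs _).symm
      rw [this]
      calc Real.sqrt (w i ^ 2) ≤ Real.sqrt (4 * u) := Real.sqrt_le_sqrt hi
        _ = 2 * Real.sqrt u := by
            rw [show (4:ℝ) * u = 2^2 * u by norm_num, Real.sqrt_mul (by positivity),
              Real.sqrt_sq (by norm_num)]
    have hbound : ∀ i, w i ^ 2 ≤ 4*u → True := fun _ _ => trivial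
    have hx2 : ‖x‖ ^ 2 ≤ 1 := by nlinarith
    have hkey : 0 ≤ u * (1 - ‖x‖ ^ 2) := mul_nonneg hu (by linarith)
    have h4u1 : w 1 ^ 2 ≤ 4 * u := by nlinarith [sq_nonneg (w 2)]
    have h4u2 : w 2 ^ 2 ≤ 4 * u := by nlinarith [sq_nonneg (w 1)]
    intro i _
    rw [hFx]
    fin_cases i
    · simp only [hr_def]
      rw [Set.mem_Icc]
      constructor
      · have := (abs_le.1 hw0abs).1; simpa [hw_def] using this
      · have := (abs_le.1 hw0abs).2; simpa [hw_def] using this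
    · have := abs_le.1 (hw1 1 h4u1)
      simp only [hr_def]
      rw [Set.mem_Icc]
      exact ⟨by simpa [hw_def] using this.1, by simpa [hw_def] using this.2⟩
    · have := abs_le.1 (hw1 2 h4u2)
      simp only [hr_def]
      rw [Set.mem_Icc]
      exact ⟨by simpa [hw_def] using this.1, by simpa [hw_def] using this.2⟩
  -- volume of the box
  have hvolP : volume P = ENNReal.ofReal (32 * u) := by
    rw [hP_def, volume_pi_pi]
    simp only [Real.volume_Icc, hr_def]
    rw [Fin.prod_univ_three]
    simp only [Matrix.cons_val_zero, Matrix.cons_val_one, Matrix.head_cons,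
      Matrix.cons_val_two, Matrix.tail_cons, sub_neg_eq_add]
    have e : ∀ (a b : ℝ), 0 ≤ a → ENNReal.ofReal a * ENNReal.ofReal b = ENNReal.ofReal (a * b) :=
      fun a b ha => (ENNReal.ofReal_mul ha).symm
    rw [show (1:ℝ) + 1 = 2 by norm_num,
      show 2 * Real.sqrt u + 2 * Real.sqrt u = 4 * Real.sqrt u by ring,
      e 2 _ (by norm_num), e _ _ (by positivity)]
    congr 1
    nlinarith [Real.mul_self_sqrt hu]
  have hvol : volume (Ioo (0:ℝ) 1 • (Subtype.val '' S)) ≤ ENNReal.ofReal (32 * u) := by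
    calc volume (Ioo (0:ℝ) 1 • (Subtype.val '' S)) ≤ volume (F ⁻¹' P) := measure_mono hincl
      _ = volume P := hF.measure_preimage hPm.nullMeasurableSet
      _ = ENNReal.ofReal (32 * u) := hvolP
  calc (Module.finrank ℝ R3 : ℝ≥0∞) * volume (Ioo (0:ℝ) 1 • (Subtype.val '' S))
      ≤ 3 * ENNReal.ofReal (32 * u) := by
        rw [show Module.finrank ℝ R3 = 3 from finrank_euclideanSpace_fin]
        exact mul_le_mul_right hvol _
    _ = ENNReal.ofReal (96 * u) := by
        rw [show (3:ℝ≥0∞) = ENNReal.ofReal 3 by norm_num, ← ENNReal.ofReal_mul (by norm_num)]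
        congr 1
        ring

lemma bracket_bound {γ η R : ℝ} (hγ : -5 ≤ γ) (hγ' : γ ≤ 0) (hη : 0 < η) (hR : 0 ≤ R)
    {ψ : ℝ → ℝ} (hψ01 : ∀ r, 0 ≤ r → ψ r ∈ Set.Icc (0:ℝ) 1)
    (hLip : LipschitzOnWith 4 ψ (Set.Ici 0))
    (hψ0 : ∀ r, 4/3 ≤ r → ψ r = 0)
    {t : ℝ} (ht0 : 0 ≤ t) (ht1 : t ≤ 1) :
    |Real.sqrt ((1+t)/2) ^ (-γ-3) * (1 - ψ (R / Real.sqrt ((1+t)/2) / η)) - (1 - ψ (R / η))|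
      ≤ 17 * ((1-t)/2) := by
  set c := Real.sqrt ((1+t)/2) with hc_def
  set w := (1-t)/2 with hw_def
  have hw0 : 0 ≤ w := by rw [hw_def]; linarith
  have hw5 : w ≤ 1/2 := by rw [hw_def]; linarith
  have hc2 : c^2 = 1 - w := by
    rw [hc_def, Real.sq_sqrt (by linarith)]; rw [hw_def]; ring
  have hc1 : c ≤ 1 := by
    rw [hc_def]
    calc Real.sqrt ((1+t)/2) ≤ Real.sqrt 1 := Real.sqrt_le_sqrt (by linarith)
      _ = 1 := Real.sqrt_one
  have hc7 : 0.7 ≤ c := by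
    rw [hc_def]
    have h1 : Real.sqrt (1/2) ≤ Real.sqrt ((1+t)/2) := Real.sqrt_le_sqrt (by linarith)
    have h2 : (0.7:ℝ) ≤ Real.sqrt (1/2) := by
      rw [show (0.7:ℝ) = Real.sqrt (0.49) by
        rw [show (0.49:ℝ) = 0.7^2 by norm_num, Real.sqrt_sq (by norm_num)]]
      exact Real.sqrt_le_sqrt (by norm_num)
    linarith
  have hcpos : 0 < c := by linarith
  -- bounds on c ^ (-γ-3)
  have hub : c ^ (-γ-3) ≤ (c^3)⁻¹ := by
    have h1 : c ^ (-γ-3) ≤ c ^ (-((3:ℕ):ℝ)) :=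
      Real.rpow_le_rpow_of_exponent_ge hcpos hc1 (by push_cast; linarith)
    rwa [Real.rpow_neg hcpos.le, Real.rpow_natCast] at h1
  have hlb : c^2 ≤ c ^ (-γ-3) := by
    have h1 : c ^ (((2:ℕ)):ℝ) ≤ c ^ (-γ-3) :=
      Real.rpow_le_rpow_of_exponent_ge hcpos hc1 (by push_cast; linarith)
    rwa [Real.rpow_natCast] at h1
  have habs : |c ^ (-γ-3) - 1| ≤ 9 * w := by
    rw [abs_le]
    constructor
    · have : 1 - c^2 = w := by linarith [hc2]
      nlinarith [hlb]
    · have hcub : (c^3)⁻¹ ≤ 1 + 9*w := by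
        rw [inv_le_iff_one_le_mul₀ (by positivity)]
        have hcw : c^3 = c * (1 - w) := by rw [← hc2]; ring
        nlinarith [mul_nonneg hw0 (by linarith : (0:ℝ) ≤ c - 0.7), sq_nonneg (1-c),
          mul_nonneg hw0 hw0]
      linarith [hub]
  -- χ facts
  have hχ1mem : ψ (R / c / η) ∈ Set.Icc (0:ℝ) 1 := hψ01 _ (by positivity)
  have hχdiff : |ψ (R / η) - ψ (R / c / η)| ≤ 8 * w := by
    rcases le_or_gt (4/3 : ℝ) (R / η) with hcase | hcase
    · have h1 : ψ (R/η) = 0 := hψ0 _ hcase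
      have h2 : ψ (R/c/η) = 0 := by
        apply hψ0
        calc (4/3 : ℝ) ≤ R/η := hcase
          _ ≤ R/c/η := by
            gcongr ?_ / η
            rw [le_div_iff₀ hcpos]
            exact mul_le_of_le_one_right hR hc1
      rw [h1, h2, sub_zero, abs_zero]
      positivity
    · have hdist := hLip.dist_le_mul (R/η) (show (R/η) ∈ Set.Ici (0:ℝ) from Set.mem_Ici.2 (by positivity))
        (R/c/η) (show (R/c/η) ∈ Set.Ici (0:ℝ) from Set.mem_Ici.2 (by positivity))
      rw [Real.dist_eq, Real.dist_eq] at hdist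
      have h4 : ((4:ℝ≥0):ℝ) = 4 := by norm_num
      rw [h4] at hdist
      have hd : |R/η - R/c/η| ≤ 2 * w := by
        have h1c : 1 - c ≤ w := by nlinarith [hc2]
        have he : R/c/η - R/η = ((R/η) * (1-c))/c := by field_simp
        have hnn : 0 ≤ ((R/η) * (1-c))/c := by
          apply div_nonneg ?_ hcpos.le
          exact mul_nonneg (by positivity) (by linarith)
        rw [abs_sub_comm, he, abs_of_nonneg hnn, div_le_iff₀ hcpos]
        have hq0 : (0:ℝ) ≤ R/η := by positivity
        nlinarith [mul_le_mul hcase.le h1c (by linarith : (0:ℝ) ≤ 1 - c) (by norm_num : (0:ℝ) ≤ 4/3),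
          mul_nonneg hw0 (by linarith : (0:ℝ) ≤ 2*c - 4/3)]
      calc |ψ (R / η) - ψ (R / c / η)| ≤ 4 * |R/η - R/c/η| := by linarith [hdist]
        _ ≤ 8 * w := by linarith
  -- assemble
  have hsplit : c ^ (-γ-3) * (1 - ψ (R / c / η)) - (1 - ψ (R / η))
      = (c ^ (-γ-3) - 1) * (1 - ψ (R / c / η)) + (ψ (R / η) - ψ (R / c / η)) := by ring
  rw [hsplit]
  have hχ1abs : |1 - ψ (R / c / η)| ≤ 1 := by
    rw [abs_le]; constructor <;> linarith [hχ1mem.1, hχ1mem.2]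
  calc |(c ^ (-γ-3) - 1) * (1 - ψ (R / c / η)) + (ψ (R / η) - ψ (R / c / η))|
      ≤ |(c ^ (-γ-3) - 1) * (1 - ψ (R / c / η))| + |ψ (R / η) - ψ (R / c / η)| := abs_add_le _ _
    _ ≤ 9 * w * 1 + 8 * w :=
        add_le_add (by rw [abs_mul]; exact mul_le_mul habs hχ1abs (abs_nonneg _) (by linarith))
          hχdiff
    _ = 17 * w := by ring

lemma rho_lt (s : ℝ) (hs0 : 0 < s) (hs1 : s < 1) :
    (1 - s) / 3 ≤ 1 - (2:ℝ) ^ (s - 1) := by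
  have hlog := Real.log_two_gt_d9
  set x := 1 - s with hx_def
  have hx0 : 0 < x := by rw [hx_def]; linarith
  have hx1 : x ≤ 1 := by rw [hx_def]; linarith
  have hrw : (2:ℝ) ^ (s-1) = Real.exp (-(x * Real.log 2)) := by
    rw [Real.rpow_def_of_pos (by norm_num), hx_def]
    ring_nf
  rw [hrw]
  have ha : 0 ≤ x * Real.log 2 := mul_nonneg hx0.le (by linarith)
  have h1 : 1 + x * Real.log 2 ≤ Real.exp (x * Real.log 2) := by
    linarith [Real.add_one_le_exp (x * Real.log 2)]
  have h2 : Real.exp (-(x * Real.log 2)) = (Real.exp (x * Real.log 2))⁻¹ := Real.exp_neg _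
  have hexp_pos : 0 < Real.exp (x * Real.log 2) := Real.exp_pos _
  have h3 : Real.exp (-(x * Real.log 2)) ≤ (1 + x * Real.log 2)⁻¹ := by
    rw [h2]
    exact inv_anti₀ (by linarith) h1
  have h4 : (1 + x * Real.log 2)⁻¹ ≤ 1 - x / 3 := by
    rw [inv_le_iff_one_le_mul₀ (by linarith)]
    have e1 : x * x ≤ x := by nlinarith
    have e2 : x * x * Real.log 2 ≤ x * Real.log 2 :=
      mul_le_mul_of_nonneg_right e1 (by linarith)
    have e3 : x * 0.6931471803 ≤ x * Real.log 2 :=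
      mul_le_mul_of_nonneg_left hlog.le hx0.le
    nlinarith [e2, e3]
  linarith

lemma geom_bound (s : ℝ) (hs0 : 0 < s) (hs1 : s < 1) :
    (∑' k : ℕ, 3264 * (1 - s) * ((2:ℝ) ^ (s - 1)) ^ k) ≤ 9792 := by
  have hρ0 : 0 ≤ (2:ℝ) ^ (s-1) := Real.rpow_nonneg (by norm_num) _
  have hρ1 : (2:ℝ) ^ (s-1) < 1 := Real.rpow_lt_one_of_one_lt_of_neg one_lt_two (by linarith)
  rw [tsum_mul_left, tsum_geometric_of_lt_one hρ0 hρ1]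
  have key := rho_lt s hs0 hs1
  have h1 : 0 < (1-s)/3 := by linarith
  have h2 : (1 - (2:ℝ)^(s-1))⁻¹ ≤ ((1-s)/3)⁻¹ := inv_anti₀ h1 key
  have h3 : ((1-s)/3)⁻¹ = 3 / (1-s) := by field_simp
  calc 3264 * (1-s) * (1 - (2:ℝ)^(s-1))⁻¹ ≤ 3264 * (1-s) * (3/(1-s)) := by
        apply mul_le_mul_of_nonneg_left ?_ (by nlinarith)
        rw [← h3]; exact h2
    _ = 3264 * ((1-s) * (3/(1-s))) := by ring
    _ = 9792 := by
        have hne : (1:ℝ) - s ≠ 0 := by linarith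
        have : (1-s) * (3/(1-s)) = 3 := by field_simp
        rw [this]
        norm_num
  
lemma exists_dyadic {w : ℝ} (h0 : 0 < w) (h1 : w ≤ 1) :
    ∃ k : ℕ, ((2:ℝ)⁻¹) ^ (k+1) < w ∧ w ≤ ((2:ℝ)⁻¹) ^ k := by
  have hex : ∃ n : ℕ, ((2:ℝ)⁻¹) ^ n < w := exists_pow_lt_of_lt_one h0 (by norm_num)
  classical
  set n := Nat.find hex with hn_def
  have hspec : ((2:ℝ)⁻¹) ^ n < w := Nat.find_spec hex
  have hn0 : n ≠ 0 := by
    intro h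
    rw [h] at hspec
    simp at hspec
    linarith
  refine ⟨n - 1, ?_, ?_⟩
  · rwa [Nat.sub_add_cancel (Nat.one_le_iff_ne_zero.2 hn0)]
  · by_contra hcon
    push_neg at hcon
    exact absurd hcon (not_lt.2 (le_of_not_gt (Nat.find_min hex (Nat.pred_lt hn0))))

set_option maxHeartbeats 1000000 in
/-- The cancellation kernel for the kernel `B^{s,γ,η}` supported away from the
relative-velocity origin: with `t = (z/‖z‖)·σ`, `c = ((1 + t)/2)^{1/2}` and
`χ(r) = 1 − ψ(r/η)`,
`S(z) = ‖z‖^γ ∫_{𝕊²} (1 − s)((1 − t)/2)^{−1−s} 1_{t ≥ 0} [c^{−γ−3} χ(‖z‖/c) − χ(‖z‖)] dσ`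
vanishes for `‖z‖ < 3η/(4√2)` and satisfies `|S(z)| ≤ C‖z‖^γ`, with `C` independent of
`s ∈ (0,1)`, `γ ∈ [−5,0]`, `η ∈ (0,1]` and the cutoff `ψ`. -/
theorem statement14 : ∃ C > (0:ℝ), ∀ s γ η : ℝ,
    s ∈ Set.Ioo (0:ℝ) 1 → γ ∈ Set.Icc (-5:ℝ) 0 → η ∈ Set.Ioc (0:ℝ) 1 →
    ∀ ψ : ℝ → ℝ,
      (∀ r, 0 ≤ r → ψ r ∈ Set.Icc (0:ℝ) 1) →
      AntitoneOn ψ (Set.Ici 0) →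
      LipschitzOnWith 4 ψ (Set.Ici 0) →
      (∀ r, 0 ≤ r → r ≤ 3/4 → ψ r = 1) →
      (∀ r, 4/3 ≤ r → ψ r = 0) →
    ∀ z : R3, z ≠ 0 →
      (let χ : ℝ → ℝ := fun r => 1 - ψ (r / η)
       let S : ℝ := ‖z‖ ^ γ * ∫ σ : Metric.sphere (0 : R3) 1,
         (1 - s) * ((1 - cosDev z σ) / 2) ^ (-1 - s)
           * (if 0 ≤ cosDev z σ then (1:ℝ) else 0)
           * (Real.sqrt ((1 + cosDev z σ) / 2) ^ (-γ - 3)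
               * χ (‖z‖ / Real.sqrt ((1 + cosDev z σ) / 2)) - χ ‖z‖) ∂sphMeas
       (‖z‖ < 3 * η / (4 * Real.sqrt 2) → S = 0) ∧ |S| ≤ C * ‖z‖ ^ γ) := by
  refine ⟨10000, by norm_num, ?_⟩
  intro s γ η hs hγ hη ψ hψ01 hanti hLip hψ1 hψ0 z hz
  obtain ⟨hs0, hs1⟩ := hs
  obtain ⟨hγ5, hγ0⟩ := hγ
  obtain ⟨hη0, hη1⟩ := hη
  have hznorm : 0 < ‖z‖ := norm_pos_iff.2 hz
  have hzγ : 0 ≤ ‖z‖ ^ γ := Real.rpow_nonneg (norm_nonneg z) γ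
  -- the integrand
  set f : Metric.sphere (0 : R3) 1 → ℝ := fun σ =>
    (1 - s) * ((1 - cosDev z σ) / 2) ^ (-1 - s)
      * (if 0 ≤ cosDev z σ then (1:ℝ) else 0)
      * (Real.sqrt ((1 + cosDev z σ) / 2) ^ (-γ - 3)
          * (1 - ψ (‖z‖ / Real.sqrt ((1 + cosDev z σ) / 2) / η)) - (1 - ψ (‖z‖ / η)))
    with hf_def
  show (‖z‖ < 3 * η / (4 * Real.sqrt 2) → ‖z‖ ^ γ * (∫ σ, f σ ∂sphMeas) = 0)
      ∧ |‖z‖ ^ γ * ∫ σ, f σ ∂sphMeas| ≤ 10000 * ‖z‖ ^ γ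
  constructor
  · -- vanishing for small z
    intro hsmall
    have hzero : ∀ σ, f σ = 0 := by
      intro σ
      simp only [hf_def]
      by_cases hind : 0 ≤ cosDev z σ
      · have hsq2 : Real.sqrt 2 * Real.sqrt 2 = 2 := Real.mul_self_sqrt (by norm_num)
        have hsq2one : (1:ℝ) ≤ Real.sqrt 2 := by
          nlinarith [Real.sqrt_nonneg 2]
        have hkey : ‖z‖ * (4 * Real.sqrt 2) < 3 * η := by
          rw [lt_div_iff₀ (by positivity)] at hsmall
          exact hsmall
        set c := Real.sqrt ((1 + cosDev z σ) / 2) with hc_def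
        have hchalf : Real.sqrt (1/2) ≤ c := Real.sqrt_le_sqrt (by linarith)
        have hch2 : Real.sqrt (1/2) * Real.sqrt 2 = 1 := by
          rw [← Real.sqrt_mul (by norm_num)]
          norm_num
        have hcpos : 0 < c := by
          have : 0 < Real.sqrt (1/2) := Real.sqrt_pos.2 (by norm_num)
          linarith
        have hψz : ψ (‖z‖ / η) = 1 := by
          apply hψ1 _ (by positivity)
          rw [div_le_iff₀ hη0]
          nlinarith [hznorm]
        have hψzc : ψ (‖z‖ / c / η) = 1 := by
          apply hψ1 _ (by positivity)
          rw [div_le_iff₀ hη0, div_le_iff₀ hcpos]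
          have hcs : 1 ≤ c * Real.sqrt 2 := by
            calc (1:ℝ) = Real.sqrt (1/2) * Real.sqrt 2 := hch2.symm
              _ ≤ c * Real.sqrt 2 := by
                  apply mul_le_mul_of_nonneg_right hchalf (Real.sqrt_nonneg 2)
          nlinarith [hznorm, Real.sqrt_nonneg 2, mul_pos hη0 hcpos]
        rw [hψz, hψzc]
        simp
      · rw [if_neg hind]
        ring
    rw [integral_eq_zero_of_ae (Filter.Eventually.of_forall hzero), mul_zero]
  · -- the uniform bound
    rw [abs_mul, abs_of_nonneg hzγ, mul_comm (10000:ℝ) (‖z‖ ^ γ)]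
    apply mul_le_mul_of_nonneg_left ?_ hzγ
    -- |∫ f| ≤ 10000
    have hbound : |∫ σ, f σ ∂sphMeas| ≤ (∫⁻ σ, ENNReal.ofReal ‖f σ‖ ∂sphMeas).toReal := by
      rw [← Real.norm_eq_abs]
      exact norm_integral_le_lintegral_norm f
    -- dyadic caps
    set A : ℕ → Set (Metric.sphere (0 : R3) 1) :=
      fun k => {σ | 1 - 2 * ((2:ℝ)⁻¹) ^ k ≤ cosDev z σ} with hA_def
    have hAm : ∀ k, MeasurableSet (A k) := fun k =>
      measurableSet_le measurable_const (continuous_cosDev z).measurable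
    set cK : ℕ → ℝ≥0∞ :=
      fun k => ENNReal.ofReal (17 * (1-s) * (((2:ℝ)⁻¹) ^ (k+1)) ^ (-s)) with hcK_def
    -- pointwise domination
    have hpt : ∀ σ, ENNReal.ofReal ‖f σ‖
        ≤ ∑' k, (A k).indicator (fun _ => cK k) σ := by
      intro σ
      by_cases hind : 0 ≤ cosDev z σ
      · set t := cosDev z σ with ht_def
        have ht1 : t ≤ 1 := (abs_le.1 (cosDev_le_one hz σ)).2
        have htm1 : -1 ≤ t := (abs_le.1 (cosDev_le_one hz σ)).1
        have hw0 : 0 ≤ (1 - t)/2 := by linarith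
        rcases eq_or_lt_of_le hw0 with heq | hlt
        · have hzrp : ((1 - t)/2 : ℝ) ^ (-1 - s) = 0 := by
            rw [← heq, Real.zero_rpow (by linarith)]
          have : f σ = 0 := by
            simp only [hf_def]
            show (1 - s) * ((1 - t) / 2) ^ (-1 - s) * _ * _ = 0
            rw [hzrp]
            ring
          rw [this]
          simp
        · have hw1 : (1 - t)/2 ≤ 1 := by linarith
          obtain ⟨k, hk1, hk2⟩ := exists_dyadic hlt hw1
          have hmem : σ ∈ A k := by
            show 1 - 2 * ((2:ℝ)⁻¹) ^ k ≤ t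
            linarith
          have hbpos : (0:ℝ) < ((2:ℝ)⁻¹) ^ (k+1) := by positivity
          have hfabs : |f σ| ≤ 17 * (1-s) * (((2:ℝ)⁻¹) ^ (k+1)) ^ (-s) := by
            have hbr := bracket_bound hγ5 hγ0 hη0 (norm_nonneg z) hψ01 hLip hψ0 hind ht1
            have hrp : (0:ℝ) ≤ ((1 - t)/2) ^ (-1 - s) := Real.rpow_nonneg hw0 _
            have h1s : (0:ℝ) ≤ 1 - s := by linarith
            have hstep1 : |f σ| = (1-s) * ((1 - t)/2) ^ (-1 - s)
                * |Real.sqrt ((1+t)/2) ^ (-γ-3)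
                    * (1 - ψ (‖z‖ / Real.sqrt ((1+t)/2) / η)) - (1 - ψ (‖z‖ / η))| := by
              simp only [hf_def]
              show |(1 - s) * ((1 - t) / 2) ^ (-1 - s) * (if 0 ≤ t then (1:ℝ) else 0) * _| = _
              rw [if_pos hind]
              rw [abs_mul, abs_mul, abs_mul, abs_of_nonneg h1s, abs_of_nonneg hrp, abs_one,
                mul_one]
            rw [hstep1]
            calc (1-s) * ((1 - t)/2) ^ (-1 - s) * |_ - _|
                ≤ (1-s) * ((1 - t)/2) ^ (-1 - s) * (17 * ((1-t)/2)) := by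
                  apply mul_le_mul_of_nonneg_left hbr (by positivity)
              _ = 17 * (1-s) * (((1 - t)/2) ^ (-s)) := by
                  have : ((1 - t)/2) ^ (-1 - s) * ((1-t)/2) = ((1 - t)/2) ^ (-s) := by
                    nth_rewrite 2 [← Real.rpow_one ((1-t)/2)]
                    rw [← Real.rpow_add hlt]
                    congr 1
                    ring
                  calc (1-s) * ((1 - t)/2) ^ (-1 - s) * (17 * ((1-t)/2))
                      = 17 * (1-s) * (((1 - t)/2) ^ (-1 - s) * ((1-t)/2)) := by ring
                    _ = 17 * (1-s) * (((1 - t)/2) ^ (-s)) := by rw [this]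
              _ ≤ 17 * (1-s) * (((2:ℝ)⁻¹) ^ (k+1)) ^ (-s) := by
                  apply mul_le_mul_of_nonneg_left ?_ (by positivity)
                  exact Real.rpow_le_rpow_of_nonpos hbpos hk1.le (by linarith)
          calc ENNReal.ofReal ‖f σ‖ ≤ cK k := by
                rw [Real.norm_eq_abs, hcK_def]
                exact ENNReal.ofReal_le_ofReal hfabs
            _ = (A k).indicator (fun _ => cK k) σ := (Set.indicator_of_mem hmem (fun _ => cK k)).symm
            _ ≤ ∑' j, (A j).indicator (fun _ => cK j) σ := ENNReal.le_tsum k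
      · have : f σ = 0 := by
          simp only [hf_def]
          show (1 - s) * _ * (if 0 ≤ cosDev z σ then (1:ℝ) else 0) * _ = 0
          rw [if_neg hind]
          ring
        rw [this]
        simp
    -- lintegral estimate
    have hterm : ∀ k : ℕ, cK k * sphMeas (A k)
        ≤ ENNReal.ofReal (3264 * (1 - s) * ((2:ℝ) ^ (s - 1)) ^ k) := by
      intro k
      have hcap : sphMeas (A k) ≤ ENNReal.ofReal (96 * ((2:ℝ)⁻¹) ^ k) := by
        rw [hA_def]
        exact cap_bound hz _ (by positivity)
      have hcKnn : (0:ℝ) ≤ 17 * (1-s) * (((2:ℝ)⁻¹) ^ (k+1)) ^ (-s) := by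
        apply mul_nonneg (by nlinarith) (Real.rpow_nonneg (by positivity) _)
      calc cK k * sphMeas (A k)
          ≤ cK k * ENNReal.ofReal (96 * ((2:ℝ)⁻¹) ^ k) := mul_le_mul_right hcap _
        _ = ENNReal.ofReal ((17 * (1-s) * (((2:ℝ)⁻¹) ^ (k+1)) ^ (-s)) * (96 * ((2:ℝ)⁻¹) ^ k)) := by
            rw [hcK_def, ← ENNReal.ofReal_mul hcKnn]
        _ ≤ ENNReal.ofReal (3264 * (1 - s) * ((2:ℝ) ^ (s - 1)) ^ k) := by
            apply ENNReal.ofReal_le_ofReal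
            -- real computation
            have e1 : (((2:ℝ)⁻¹) ^ (k+1) : ℝ) ^ (-s) = (2:ℝ) ^ (((k:ℝ)+1) * s) := by
              rw [inv_pow, ← Real.rpow_natCast (2:ℝ) (k+1),
                ← Real.rpow_neg (by norm_num : (0:ℝ) ≤ 2),
                ← Real.rpow_mul (by norm_num : (0:ℝ) ≤ 2)]
              push_cast
              ring_nf
            have e2 : (((2:ℝ)⁻¹) ^ k : ℝ) = (2:ℝ) ^ (-(k:ℝ)) := by
              rw [inv_pow, ← Real.rpow_natCast (2:ℝ) k,
                ← Real.rpow_neg (by norm_num : (0:ℝ) ≤ 2)]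
            have e3 : (((2:ℝ) ^ (s-1)) ^ k : ℝ) = (2:ℝ) ^ ((s-1) * (k:ℝ)) := by
              rw [← Real.rpow_natCast ((2:ℝ) ^ (s-1)) k,
                ← Real.rpow_mul (by norm_num : (0:ℝ) ≤ 2)]
            have e4 : (2:ℝ) ^ (((k:ℝ)+1) * s) * (2:ℝ) ^ (-(k:ℝ))
                = (2:ℝ) ^ s * (2:ℝ) ^ ((s-1) * (k:ℝ)) := by
              rw [← Real.rpow_add (by norm_num : (0:ℝ) < 2),
                ← Real.rpow_add (by norm_num : (0:ℝ) < 2)]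
              congr 1
              ring
            rw [e1, e2, e3]
            have h2s : (2:ℝ) ^ s ≤ 2 := by
              calc (2:ℝ) ^ s ≤ (2:ℝ) ^ (1:ℝ) :=
                    Real.rpow_le_rpow_of_exponent_le (by norm_num) hs1.le
                _ = 2 := Real.rpow_one 2
            have hX : (0:ℝ) ≤ (2:ℝ) ^ ((s-1) * (k:ℝ)) := Real.rpow_nonneg (by norm_num) _
            have h1s : (0:ℝ) ≤ 1 - s := by linarith
            calc 17 * (1-s) * (2:ℝ) ^ (((k:ℝ)+1) * s) * (96 * (2:ℝ) ^ (-(k:ℝ)))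
                = 1632 * (1-s) * ((2:ℝ) ^ (((k:ℝ)+1) * s) * (2:ℝ) ^ (-(k:ℝ))) := by ring
              _ = 1632 * (1-s) * ((2:ℝ) ^ s * (2:ℝ) ^ ((s-1) * (k:ℝ))) := by rw [e4]
              _ ≤ 1632 * (1-s) * (2 * (2:ℝ) ^ ((s-1) * (k:ℝ))) := by
                  apply mul_le_mul_of_nonneg_left ?_ (by positivity)
                  exact mul_le_mul_of_nonneg_right h2s hX
              _ = 3264 * (1-s) * (2:ℝ) ^ ((s-1) * (k:ℝ)) := by ring
    have hsummable : Summable (fun k : ℕ => 3264 * (1 - s) * ((2:ℝ) ^ (s - 1)) ^ k) := by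
      apply Summable.mul_left
      apply summable_geometric_of_lt_one (Real.rpow_nonneg (by norm_num) _)
      exact Real.rpow_lt_one_of_one_lt_of_neg one_lt_two (by linarith)
    have hlint : (∫⁻ σ, ENNReal.ofReal ‖f σ‖ ∂sphMeas) ≤ ENNReal.ofReal 9792 := by
      calc (∫⁻ σ, ENNReal.ofReal ‖f σ‖ ∂sphMeas)
          ≤ ∫⁻ σ, ∑' k, (A k).indicator (fun _ => cK k) σ ∂sphMeas := lintegral_mono hpt
        _ = ∑' k, ∫⁻ σ, (A k).indicator (fun _ => cK k) σ ∂sphMeas :=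
            lintegral_tsum fun k => (measurable_const.indicator (hAm k)).aemeasurable
        _ = ∑' k, cK k * sphMeas (A k) := by
            apply tsum_congr
            intro k
            rw [lintegral_indicator (hAm k), setLIntegral_const]
        _ ≤ ∑' k, ENNReal.ofReal (3264 * (1 - s) * ((2:ℝ) ^ (s - 1)) ^ k) :=
            ENNReal.tsum_le_tsum hterm
        _ = ENNReal.ofReal (∑' k : ℕ, 3264 * (1 - s) * ((2:ℝ) ^ (s - 1)) ^ k) :=
            (ENNReal.ofReal_tsum_of_nonneg
              (fun k => mul_nonneg (by nlinarith)
                (pow_nonneg (Real.rpow_nonneg (by norm_num) _) k)) hsummable).symm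
        _ ≤ ENNReal.ofReal 9792 := ENNReal.ofReal_le_ofReal (geom_bound s hs0 hs1)
    calc |∫ σ, f σ ∂sphMeas| ≤ (∫⁻ σ, ENNReal.ofReal ‖f σ‖ ∂sphMeas).toReal := hbound
      _ ≤ 9792 := ENNReal.toReal_le_of_le_ofReal (by norm_num) hlint
      _ ≤ 10000 := by norm_num

end
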